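/- arXiv:1907.01433 — 2 statements merged into one kernel-verified Lean document; each statement's English description precedes it below -/
import Mathlib

section
/- Let s, s_old, s_new be real numbers, γ ∈ (0,1) and ε > 0. Suppose that s_new ≤ s, that s − s_new ≤ (1−γ)·(s − s_old), and that the stopping criterion s_new − εγ/(1−γ) < s_old holds. Then s_new ≤ s ≤ s_new + ε; in particular s_new + ε is an additive ε-approximation of s, i.e., s ≤ s_new + ε ≤ s + ε. -/
/-- Correctness of the stopping criterion of the iterative sensitivity
algorithm: if `s_new ≤ s`, the iteration satisfies `s − s_new ≤ (1−γ)(s − s_old)` for a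
rate `γ ∈ (0,1)`, and the stopping criterion `s_new − εγ/(1−γ) < s_old` holds, then
`s_new ≤ s ≤ s_new + ε`; in particular `s_new + ε` is an additive `ε`-approximation of
`s`, i.e. `s ≤ snew + ε ≤ s + ε`. -/
theorem stmt2 (s sold snew γ ε : ℝ) (hγ : γ ∈ Set.Ioo (0 : ℝ) 1) (hε : 0 < ε)
    (h1 : snew ≤ s) (h2 : s - snew ≤ (1 - γ) * (s - sold))
    (h3 : snew - ε * γ / (1 - γ) < sold) :
    (snew ≤ s ∧ s ≤ snew + ε) ∧ (s ≤ snew + ε ∧ snew + ε ≤ s + ε) := by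
  obtain ⟨hg0, hg1⟩ := hγ
  have h1γ : 0 < 1 - γ := by linarith
  have h3' : (snew - ε * γ / (1 - γ)) * (1 - γ) < sold * (1 - γ) :=
    mul_lt_mul_of_pos_right h3 h1γ
  have hdiv : ε * γ / (1 - γ) * (1 - γ) = ε * γ := div_mul_cancel₀ _ (ne_of_gt h1γ)
  have hkey : s ≤ snew + ε := by nlinarith [mul_lt_mul_of_pos_left h3 h1γ]
  exact ⟨⟨h1, hkey⟩, hkey, by linarith⟩
end

section
/- Let d ≥ 1 be an integer, k ∈ {0,…,d−1}, z ≥ 1 a real number, and ε ∈ (0, 1/(2^{z+1}+2)]. Let P be a finite nonempty set of points in ℝ^d, set ψ = (ε/z)^z and r = 1 + max_{q∈P} D_z(q, 0_d)/(ψ·ε²). Let p ∈ P and let S be a nonempty affine k-subspace of ℝ^d such that D_z(0_d, S) ≥ ε·r. Then |D_z(0_d, S) − D_z(p, S)| ≤ 2ε·D_z(0_d, S). -/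
/-!
Write `a = dist(0, S)` and `δ = dist(p, 0)`. The choice of `r` gives
`δ^z ≤ ψ ε² r ≤ ψ ε a^z ≤ ((ε/z) a)^z`, so `p` lies within `(ε/z) a` of the origin. Since the
distance to `S` is `1`-Lipschitz, `dist(p, S)` lies within a factor `1 ± ε/z` of `a`, and raising
to the power `z` costs at most a factor `(1 - ε/z)^z ≥ 1 - ε` (Bernoulli) from below and
`(1 + ε/z)^z ≤ e^ε ≤ 1 + 2ε` from above.
-/

open Real

theorem Real.exp_le_one_add_two_mul {x : ℝ} (hx₀ : 0 ≤ x) (hx : x ≤ 1 / 2) :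
    exp x ≤ 1 + 2 * x := by
  have hx₁ : 0 < 1 - x := by linarith
  calc exp x ≤ 1 / (1 - x) := exp_bound_div_one_sub_of_interval hx₀ (by linarith)
    _ ≤ 1 + 2 * x := by
      rw [div_le_iff₀ hx₁]
      nlinarith

theorem Real.one_add_div_rpow_le_exp {x z : ℝ} (hx : 0 ≤ x) (hz : 0 < z) :
    (1 + x / z) ^ z ≤ exp x := by
  calc (1 + x / z) ^ z ≤ exp (x / z) ^ z :=
        rpow_le_rpow (by positivity) (by linarith [add_one_le_exp (x / z)]) hz.le
    _ = exp x := by rw [← exp_mul, div_mul_cancel₀ _ hz.ne']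

theorem Real.one_sub_le_one_sub_div_rpow {x z : ℝ} (hx : x ≤ z) (hz : 1 ≤ z) :
    1 - x ≤ (1 - x / z) ^ z := by
  have hz₀ : 0 < z := one_pos.trans_le hz
  have h := one_add_mul_self_le_rpow_one_add (s := -(x / z))
    (by rw [neg_le_neg_iff, div_le_one hz₀]; exact hx) hz
  rwa [mul_neg, mul_div_cancel₀ _ hz₀.ne', ← sub_eq_add_neg, ← sub_eq_add_neg] at h

theorem Real.abs_rpow_sub_rpow_le {a b ε z : ℝ} (ha : 0 ≤ a) (hb : 0 ≤ b)
    (hε₀ : 0 ≤ ε) (hε : ε ≤ 1 / 2) (hz : 1 ≤ z) (hab : |a - b| ≤ ε / z * a) :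
    |a ^ z - b ^ z| ≤ 2 * ε * a ^ z := by
  have hz₀ : 0 < z := one_pos.trans_le hz
  have haz : 0 ≤ a ^ z := rpow_nonneg ha z
  have hdiv : 0 ≤ 1 - ε / z := by linarith [div_le_self hε₀ hz]
  rw [abs_le] at hab
  have hlow : (1 - ε) * a ^ z ≤ b ^ z :=
    calc (1 - ε) * a ^ z ≤ (1 - ε / z) ^ z * a ^ z :=
          mul_le_mul_of_nonneg_right (one_sub_le_one_sub_div_rpow (by linarith) hz) haz
      _ = ((1 - ε / z) * a) ^ z := (mul_rpow hdiv ha).symm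
      _ ≤ b ^ z := rpow_le_rpow (mul_nonneg hdiv ha) (by linarith) hz₀.le
  have hup : b ^ z ≤ (1 + 2 * ε) * a ^ z :=
    calc b ^ z ≤ ((1 + ε / z) * a) ^ z := rpow_le_rpow hb (by linarith) hz₀.le
      _ = (1 + ε / z) ^ z * a ^ z := mul_rpow (by positivity) ha
      _ ≤ (1 + 2 * ε) * a ^ z := mul_le_mul_of_nonneg_right
          ((one_add_div_rpow_le_exp hε₀ hz₀).trans (exp_le_one_add_two_mul hε₀ hε)) haz
  rw [abs_le]
  constructor <;> linarith

theorem le_div_mul_of_rpow_div_le {δ a r ε z : ℝ} (hδ : 0 ≤ δ) (ha : 0 ≤ a)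
    (hε₀ : 0 < ε) (hε : ε ≤ 1) (hz : 0 < z)
    (hδr : δ ^ z / ((ε / z) ^ z * ε ^ 2) ≤ r) (hr : ε * r ≤ a ^ z) :
    δ ≤ ε / z * a := by
  have hψ : 0 < (ε / z) ^ z := rpow_pos_of_pos (div_pos hε₀ hz) z
  have haz : 0 ≤ a ^ z := rpow_nonneg ha z
  rw [div_le_iff₀ (by positivity)] at hδr
  rw [← rpow_le_rpow_iff hδ (by positivity) hz, mul_rpow (by positivity) ha]
  calc δ ^ z ≤ (ε / z) ^ z * ε * (ε * r) := by linarith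
    _ ≤ (ε / z) ^ z * ε * a ^ z := by gcongr
    _ ≤ (ε / z) ^ z * a ^ z := by
      rw [mul_assoc]
      gcongr
      exact mul_le_of_le_one_left haz hε

theorem stmt3_general (d : ℕ)
    (z ε : ℝ) (hz : 1 ≤ z) (hε : ε ∈ Set.Ioc (0 : ℝ) (1 / (2 ^ (z + 1) + 2)))
    (P : Finset (EuclideanSpace ℝ (Fin d))) (hP : P.Nonempty)
    (p : EuclideanSpace ℝ (Fin d)) (hp : p ∈ P)
    (ψ r : ℝ) (hψ : ψ = (ε / z) ^ z)
    (hr : r = 1 + P.sup' hP fun q => dist q 0 ^ z / (ψ * ε ^ 2))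
    (S : AffineSubspace ℝ (EuclideanSpace ℝ (Fin d)))
    (hfar : ε * r ≤ Metric.infDist 0 (S : Set (EuclideanSpace ℝ (Fin d))) ^ z) :
    |Metric.infDist 0 (S : Set (EuclideanSpace ℝ (Fin d))) ^ z -
        Metric.infDist p (S : Set (EuclideanSpace ℝ (Fin d))) ^ z| ≤
      2 * ε * Metric.infDist 0 (S : Set (EuclideanSpace ℝ (Fin d))) ^ z := by
  obtain ⟨hε₀, hε⟩ := hε
  have hε_half : ε ≤ 1 / 2 := hε.trans <| one_div_le_one_div_of_le two_pos <| by
    linarith [rpow_pos_of_pos two_pos (z + 1)]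
  have hpr : dist p 0 ^ z / (ψ * ε ^ 2) ≤ r := by
    rw [hr]
    linarith [Finset.le_sup' (fun q => dist q 0 ^ z / (ψ * ε ^ 2)) hp]
  subst hψ
  have hp_near : dist p 0 ≤ ε / z * Metric.infDist 0 (S : Set (EuclideanSpace ℝ (Fin d))) :=
    le_div_mul_of_rpow_div_le dist_nonneg Metric.infDist_nonneg hε₀ (by linarith)
      (one_pos.trans_le hz) hpr hfar
  refine abs_rpow_sub_rpow_le Metric.infDist_nonneg Metric.infDist_nonneg hε₀.le hε_half hz ?_
  have hlip := (Metric.lipschitz_infDist_pt (S : Set (EuclideanSpace ℝ (Fin d)))).dist_le_mul 0 p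
  rw [Real.dist_eq, NNReal.coe_one, one_mul, dist_comm] at hlip
  exact hlip.trans hp_near

/-- Let `z ≥ 1`, `ε ∈ (0, 1/(2^{z+1}+2)]`, `P` a finite nonempty set of
points in `ℝ^d`, `ψ = (ε/z)^z`, `r = 1 + max_{q∈P} dist(q,0)^z/(ψε²)`. If `p ∈ P` and `S`
is a nonempty affine `k`-subspace of `ℝ^d` with `D_z(0,S) ≥ εr`, then
`|D_z(0,S) − D_z(p,S)| ≤ 2ε·D_z(0,S)`, where `D_z(x,S) = dist(x,S)^z`. -/
theorem stmt3 (d k : ℕ) (hd : 1 ≤ d) (hk : k ≤ d - 1)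
    (z ε : ℝ) (hz : 1 ≤ z) (hε : ε ∈ Set.Ioc (0 : ℝ) (1 / (2 ^ (z + 1) + 2)))
    (P : Finset (EuclideanSpace ℝ (Fin d))) (hP : P.Nonempty)
    (p : EuclideanSpace ℝ (Fin d)) (hp : p ∈ P)
    (ψ r : ℝ) (hψ : ψ = (ε / z) ^ z)
    (hr : r = 1 + P.sup' hP fun q => dist q 0 ^ z / (ψ * ε ^ 2))
    (S : AffineSubspace ℝ (EuclideanSpace ℝ (Fin d)))
    (hS : (S : Set (EuclideanSpace ℝ (Fin d))).Nonempty)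
    (hdim : Module.finrank ℝ S.direction = k)
    (hfar : ε * r ≤ Metric.infDist 0 (S : Set (EuclideanSpace ℝ (Fin d))) ^ z) :
    |Metric.infDist 0 (S : Set (EuclideanSpace ℝ (Fin d))) ^ z -
        Metric.infDist p (S : Set (EuclideanSpace ℝ (Fin d))) ^ z| ≤
      2 * ε * Metric.infDist 0 (S : Set (EuclideanSpace ℝ (Fin d))) ^ z :=
  stmt3_general d z ε hz hε P hP p hp ψ r hψ hr S hfar
end
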